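/- arXiv:2003.03490 — 7 statements merged into one kernel-verified Lean document; each statement's English description precedes it below -/
import Mathlib

section
/- Let S be a nonempty finite set, let η > 0 and R > 0, let T be a natural number, and let ℓ_1, …, ℓ_T : S → ℝ satisfy ℓ_t(a) ∈ [0, R] for all t and all a ∈ S. Define the Hedge distributions p_1, …, p_T on S by p_1(a) = 1/|S| and p_{t+1}(a) = p_t(a)·exp(−η ℓ_t(a)) / Σ_{a'∈S} p_t(a')·exp(−η ℓ_t(a')). Then Σ_{t=1}^T Σ_{a∈S} p_t(a) ℓ_t(a) ≤ (ηR/(1 − e^{−ηR})) · min_{a*∈S} Σ_{t=1}^T ℓ_t(a*) + R·ln(|S|)/(1 − e^{−ηR}). -/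
open Finset

/-- Convexity bound: on `[0, R]`, `exp (-η x)` lies below the chord. -/
lemma hedge_exp_le_interp (η R x : ℝ) (hR : 0 < R) (hx0 : 0 ≤ x) (hxR : x ≤ R) :
    Real.exp (-η * x) ≤ 1 - (1 - Real.exp (-η * R)) * (x / R) := by
  have hl0 : 0 ≤ x / R := div_nonneg hx0 hR.le
  have hl1 : x / R ≤ 1 := (div_le_one hR).2 hxR
  have h := convexOn_exp.2
      (Set.mem_univ (0:ℝ)) (Set.mem_univ (-η * R))
      (by linarith : (0:ℝ) ≤ 1 - x / R) hl0
      (by ring : (1 - x / R) + x / R = 1)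
  have harg : (1 - x / R) • (0:ℝ) + (x / R) • (-η * R) = -η * x := by
    simp only [smul_eq_mul]
    field_simp
    ring
  rw [harg] at h
  simp only [smul_eq_mul, Real.exp_zero] at h
  nlinarith [h]

/-- Hedge regret bound (Lemma 1 of the paper, deterministic form):
the expected total loss of the exponential-weights distributions is bounded by
(ηR/(1 - e^{-ηR})) times the loss of the best action plus R ln|S|/(1 - e^{-ηR}). -/
theorem hedge_regret_bound {α : Type*} (S : Finset α) (hS : S.Nonempty)
    (η R : ℝ) (hη : 0 < η) (hR : 0 < R) (T : ℕ) (ℓ : ℕ → α → ℝ)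
    (hℓ : ∀ t < T, ∀ a ∈ S, ℓ t a ∈ Set.Icc 0 R)
    (p : ℕ → α → ℝ)
    (hp0 : ∀ a ∈ S, p 0 a = 1 / S.card)
    (hprec : ∀ t < T, ∀ a ∈ S,
      p (t + 1) a = p t a * Real.exp (-η * ℓ t a)
        / ∑ a' ∈ S, p t a' * Real.exp (-η * ℓ t a')) :
    ∑ t ∈ Finset.range T, ∑ a ∈ S, p t a * ℓ t a ≤
      (η * R / (1 - Real.exp (-η * R)))
          * S.inf' hS (fun a => ∑ t ∈ Finset.range T, ℓ t a)
        + R * Real.log S.card / (1 - Real.exp (-η * R)) := by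
  classical
  set c : ℝ := 1 - Real.exp (-η * R) with hc_def
  have hcpos : 0 < c := by
    have h1 : Real.exp (-η * R) < 1 := by
      rw [Real.exp_lt_one_iff]; nlinarith
    simp only [hc_def]; linarith
  have hcard : (0:ℝ) < S.card := by exact_mod_cast Finset.card_pos.mpr hS
  set w : ℕ → α → ℝ :=
    fun t a => (1 / S.card) * Real.exp (-η * ∑ s ∈ Finset.range t, ℓ s a) with hw_def
  set W : ℕ → ℝ := fun t => ∑ a ∈ S, w t a with hW_def
  have hwpos : ∀ t a, 0 < w t a := by
    intro t a; simp only [hw_def]; positivity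
  have hWpos : ∀ t, 0 < W t := fun t => Finset.sum_pos (fun a _ => hwpos t a) hS
  have hW0 : W 0 = 1 := by
    simp only [hW_def, hw_def, Finset.range_zero, Finset.sum_empty, mul_zero,
      Real.exp_zero, mul_one, Finset.sum_const, nsmul_eq_mul]
    field_simp
  -- w recursion
  have hwrec : ∀ t a, w (t + 1) a = w t a * Real.exp (-η * ℓ t a) := by
    intro t a
    simp only [hw_def, Finset.sum_range_succ, mul_add, Real.exp_add]
    ring
  -- p t a = w t a / W t
  have hpw : ∀ t, t ≤ T → ∀ a ∈ S, p t a = w t a / W t := by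
    intro t
    induction t with
    | zero =>
      intro _ a ha
      rw [hp0 a ha, hW0]
      simp [hw_def]
    | succ t ih =>
      intro ht a ha
      have htT : t < T := ht
      rw [hprec t htT a ha]
      have hrw : ∀ b ∈ S, p t b * Real.exp (-η * ℓ t b) = w (t + 1) b / W t := by
        intro b hb
        rw [ih htT.le b hb, hwrec t b]
        ring
      rw [hrw a ha, Finset.sum_congr rfl hrw, ← Finset.sum_div]
      show w (t + 1) a / W t / (W (t + 1) / W t) = w (t + 1) a / W (t + 1)
      have h1 := (hWpos t).ne'
      have h2 := (hWpos (t + 1)).ne'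
      field_simp
  have hppos : ∀ t, t ≤ T → ∀ a ∈ S, 0 < p t a := by
    intro t ht a ha
    rw [hpw t ht a ha]
    exact div_pos (hwpos t a) (hWpos t)
  have hpsum : ∀ t, t ≤ T → ∑ a ∈ S, p t a = 1 := by
    intro t ht
    rw [Finset.sum_congr rfl (hpw t ht), ← Finset.sum_div]
    exact div_self (hWpos t).ne'
  -- per-step bound
  have hstep : ∀ t < T,
      Real.log (W (t + 1)) ≤ Real.log (W t) - (c / R) * ∑ a ∈ S, p t a * ℓ t a := by
    intro t htT
    have hWt1 : W (t + 1) = W t * ∑ a ∈ S, p t a * Real.exp (-η * ℓ t a) := by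
      simp only [hW_def]
      rw [Finset.mul_sum]
      refine Finset.sum_congr rfl fun a ha => ?_
      rw [hwrec t a, hpw t htT.le a ha]
      have hWt0 := (hWpos t).ne'
      simp only [hW_def] at hWt0 ⊢
      field_simp
    set Q : ℝ := ∑ a ∈ S, p t a * Real.exp (-η * ℓ t a) with hQ_def
    have hQpos : 0 < Q :=
      Finset.sum_pos (fun a ha => mul_pos (hppos t htT.le a ha) (Real.exp_pos _)) hS
    have hQle : Q ≤ 1 - (c / R) * ∑ a ∈ S, p t a * ℓ t a := by
      have h1 : Q ≤ ∑ a ∈ S, p t a * (1 - c * (ℓ t a / R)) := by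
        refine Finset.sum_le_sum fun a ha => ?_
        have hla := hℓ t htT a ha
        exact mul_le_mul_of_nonneg_left
          (hedge_exp_le_interp η R (ℓ t a) hR hla.1 hla.2) (hppos t htT.le a ha).le
      have h2 : ∑ a ∈ S, p t a * (1 - c * (ℓ t a / R))
          = (∑ a ∈ S, p t a) - (c / R) * ∑ a ∈ S, p t a * ℓ t a := by
        rw [Finset.mul_sum, ← Finset.sum_sub_distrib]
        refine Finset.sum_congr rfl fun a ha => ?_
        field_simp
      rw [h2, hpsum t htT.le] at h1
      exact h1
    have hlogQ : Real.log Q ≤ - (c / R) * ∑ a ∈ S, p t a * ℓ t a := by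
      have := Real.log_le_sub_one_of_pos hQpos
      linarith
    rw [hWt1, Real.log_mul (hWpos t).ne' hQpos.ne']
    linarith
  -- telescoping
  have htel : ∀ t, t ≤ T →
      Real.log (W t) ≤ - (c / R) * ∑ s ∈ Finset.range t, ∑ a ∈ S, p s a * ℓ s a := by
    intro t
    induction t with
    | zero => intro _; simp [hW0]
    | succ t ih =>
      intro ht
      have htT : t < T := ht
      have h1 := hstep t htT
      have h2 := ih htT.le
      rw [Finset.sum_range_succ]
      have : - (c / R) * (∑ s ∈ Finset.range t, ∑ a ∈ S, p s a * ℓ s a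
          + ∑ a ∈ S, p t a * ℓ t a)
          = - (c / R) * ∑ s ∈ Finset.range t, ∑ a ∈ S, p s a * ℓ s a
            - (c / R) * ∑ a ∈ S, p t a * ℓ t a := by ring
      rw [this]
      linarith
  -- best action
  obtain ⟨astar, hastar, heq⟩ :=
    S.exists_mem_eq_inf' hS (fun a => ∑ t ∈ Finset.range T, ℓ t a)
  set Lstar : ℝ := ∑ t ∈ Finset.range T, ℓ t astar with hL_def
  have hWT_lb : w T astar ≤ W T :=
    Finset.single_le_sum (fun a _ => (hwpos T a).le) hastar
  have hlog_lb : - Real.log S.card - η * Lstar ≤ Real.log (W T) := by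
    have h1 : Real.log (w T astar) ≤ Real.log (W T) :=
      Real.log_le_log (hwpos T astar) hWT_lb
    have h2 : Real.log (w T astar) = - Real.log S.card - η * Lstar := by
      simp only [hw_def]
      rw [Real.log_mul (by positivity) (Real.exp_pos _).ne', Real.log_exp,
        one_div, Real.log_inv]
      ring
    linarith
  have hmain : (c / R) * ∑ t ∈ Finset.range T, ∑ a ∈ S, p t a * ℓ t a
      ≤ η * Lstar + Real.log S.card := by
    have := htel T le_rfl
    linarith
  have hcR : 0 < c / R := div_pos hcpos hR
  rw [heq]
  have hfinal : ∑ t ∈ Finset.range T, ∑ a ∈ S, p t a * ℓ t a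
      ≤ (R / c) * (η * Lstar + Real.log S.card) := by
    have h3 : ∑ t ∈ Finset.range T, ∑ a ∈ S, p t a * ℓ t a
        = (R / c) * ((c / R) * ∑ t ∈ Finset.range T, ∑ a ∈ S, p t a * ℓ t a) := by
      field_simp
    rw [h3]
    exact mul_le_mul_of_nonneg_left hmain (by positivity)
  calc ∑ t ∈ Finset.range T, ∑ a ∈ S, p t a * ℓ t a
      ≤ (R / c) * (η * Lstar + Real.log S.card) := hfinal
    _ = (η * R / c) * Lstar + R * Real.log S.card / c := by
        field_simp
end

section
/- Let S be a nonempty finite set, let η > 0 and R > 0, let p : S → [0,1] satisfy Σ_{a∈S} p(a) = 1, and let ℓ : S → ℝ satisfy ℓ(a) ∈ [0, R] for all a ∈ S. Then ln( Σ_{a∈S} p(a)·exp(−η ℓ(a)) ) ≤ −((1 − exp(−η R))/R) · Σ_{a∈S} p(a) ℓ(a). -/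
/-- Chord bound for the convex function `exp (-η x)` on `[0, R]`. -/
lemma chord_bound (η R x : ℝ) (hη : 0 < η) (hR : 0 < R)
    (hx0 : 0 ≤ x) (hxR : x ≤ R) :
    Real.exp (-η * x) ≤ 1 - ((1 - Real.exp (-η * R)) / R) * x := by
  have ht0 : 0 ≤ x / R := div_nonneg hx0 hR.le
  have ht1 : x / R ≤ 1 := (div_le_one hR).2 hxR
  have h := convexOn_exp.2 (Set.mem_univ (0 : ℝ)) (Set.mem_univ (-η * R))
    (by linarith : (0:ℝ) ≤ 1 - x / R) ht0 (by ring)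
  have hx : (1 - x / R) • (0:ℝ) + (x / R) • (-η * R) = -η * x := by
    simp only [smul_eq_mul]; field_simp [hR.ne']; ring
  rw [hx] at h
  calc Real.exp (-η * x) ≤ (1 - x / R) • Real.exp 0 + (x / R) • Real.exp (-η * R) := h
    _ = 1 - ((1 - Real.exp (-η * R)) / R) * x := by
        rw [Real.exp_zero]; simp only [smul_eq_mul]; field_simp [hR.ne']; ring

/-- One-step potential decrease bound for exponential weights. -/
theorem log_sum_exp_le {α : Type*} (S : Finset α) (hS : S.Nonempty)
    (η R : ℝ) (hη : 0 < η) (hR : 0 < R)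
    (p : α → ℝ) (hp : ∀ a ∈ S, p a ∈ Set.Icc (0 : ℝ) 1)
    (hsum : ∑ a ∈ S, p a = 1)
    (ℓ : α → ℝ) (hℓ : ∀ a ∈ S, ℓ a ∈ Set.Icc 0 R) :
    Real.log (∑ a ∈ S, p a * Real.exp (-η * ℓ a)) ≤
      -((1 - Real.exp (-η * R)) / R) * ∑ a ∈ S, p a * ℓ a := by
  set c := (1 - Real.exp (-η * R)) / R with hc
  have hpos : 0 < ∑ a ∈ S, p a * Real.exp (-η * ℓ a) := by
    have : (Real.exp (-η * R)) = ∑ a ∈ S, p a * Real.exp (-η * R) := by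
      rw [← Finset.sum_mul, hsum, one_mul]
    calc (0:ℝ) < Real.exp (-η * R) := Real.exp_pos _
      _ = ∑ a ∈ S, p a * Real.exp (-η * R) := this
      _ ≤ ∑ a ∈ S, p a * Real.exp (-η * ℓ a) := by
          apply Finset.sum_le_sum
          intro a ha
          apply mul_le_mul_of_nonneg_left _ (hp a ha).1
          apply Real.exp_le_exp.2
          have := (hℓ a ha).2
          nlinarith
  have hbound : ∑ a ∈ S, p a * Real.exp (-η * ℓ a) ≤ 1 - c * ∑ a ∈ S, p a * ℓ a := by
    have : ∑ a ∈ S, p a * Real.exp (-η * ℓ a) ≤ ∑ a ∈ S, p a * (1 - c * ℓ a) := by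
      apply Finset.sum_le_sum
      intro a ha
      exact mul_le_mul_of_nonneg_left
        (chord_bound η R (ℓ a) hη hR (hℓ a ha).1 (hℓ a ha).2) (hp a ha).1
    calc ∑ a ∈ S, p a * Real.exp (-η * ℓ a) ≤ ∑ a ∈ S, p a * (1 - c * ℓ a) := this
      _ = (∑ a ∈ S, p a) - c * ∑ a ∈ S, p a * ℓ a := by
          rw [Finset.mul_sum, ← Finset.sum_sub_distrib]
          congr 1; ext a; ring
      _ = 1 - c * ∑ a ∈ S, p a * ℓ a := by rw [hsum]
  calc Real.log (∑ a ∈ S, p a * Real.exp (-η * ℓ a))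
      ≤ (∑ a ∈ S, p a * Real.exp (-η * ℓ a)) - 1 := Real.log_le_sub_one_of_pos hpos
    _ ≤ -c * ∑ a ∈ S, p a * ℓ a := by linarith
end

section
/- Let α be a type and w : α → α → α a winner function. Define the tournament round step : List α → List α recursively by step([]) = [], step([a]) = [a], and step(a :: b :: rest) = w(a,b) :: step(rest). Let z ∈ α satisfy w(z, a) = z and w(a, z) = z for all a ∈ α. Then for every list l with z ∈ l and every m ∈ ℕ, z is a member of the m-fold iterate step^[m](l); in particular, if step^[m](l) = [c] for some c, then c = z. -/
/-- One round of a single-elimination tournament: consecutive players are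
paired, the winner of each pair advances, and an unpaired last player
passes through. -/
def tournamentStep {α : Type*} (w : α → α → α) : List α → List α
  | [] => []
  | [a] => [a]
  | a :: b :: rest => w a b :: tournamentStep w rest

lemma tournamentStep_mem {α : Type*} (w : α → α → α) (z : α)
    (hz : ∀ a : α, w z a = z ∧ w a z = z) :
    ∀ l : List α, z ∈ l → z ∈ tournamentStep w l := by
  intro l
  induction l using tournamentStep.induct with
  | case1 => simp
  | case2 a => simp [tournamentStep]
  | case3 a b rest ih =>
    intro h
    simp only [tournamentStep, List.mem_cons] at h ⊢
    rcases h with rfl | rfl | h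
    · exact Or.inl ((hz b).1).symm
    · exact Or.inl ((hz a).2).symm
    · exact Or.inr (ih h)

/-- If z wins every match it plays, then z survives every round of the
tournament; in particular if a single champion remains, it is z. -/
theorem tournament_winner {α : Type*} (w : α → α → α) (z : α)
    (hz : ∀ a : α, w z a = z ∧ w a z = z)
    (l : List α) (hl : z ∈ l) (m : ℕ) :
    z ∈ (tournamentStep w)^[m] l ∧
      ∀ c : α, (tournamentStep w)^[m] l = [c] → c = z := by
  have hmem : z ∈ (tournamentStep w)^[m] l := by
    induction m with
    | zero => simpa
    | succ n ih =>
      rw [Function.iterate_succ_apply']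
      exact tournamentStep_mem w z hz _ ih
  refine ⟨hmem, fun c hc => ?_⟩
  rw [hc] at hmem
  simp at hmem; exact hmem.symm
end

section
/- Let N, K ≥ 1, let A ⊆ [N] with |A| ≤ K, let Z ⊆ A with |Z| = 2, and define losses ℓ(a) = 0 if a ∈ Z and ℓ(a) = 1 otherwise. Let σ be a ranking of [N]. For each unordered pair {X, Y} of disjoint 2-element subsets of [N], define c^{X,Y}(X) = 𝟙[Z = Y and X ⊆ A] and c^{X,Y}(Y) = 𝟙[Z = X and Y ⊆ A], and define σ's choice in the sub-problem as σ(X,Y) = X if σ(X ∪ Y) ∈ X and σ(X,Y) = Y otherwise. Then Σ over all unordered pairs {X,Y} of disjoint 2-element subsets of [N] of c^{X,Y}(σ(X,Y)) is at most C(K−2, 2) · ℓ(σ(A)). -/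
/-- HOPP pair-of-pairs sub-problem loss bound (first half of Lemma 8 of the
paper): the total sub-problem loss of a ranking σ over all unordered pairs
{X, Y} of disjoint 2-element subsets of [N] is at most C(K-2, 2)·ℓ(σ(A)).
An unordered pair {X, Y} is encoded as a 2-element set Q of 2-element subsets
of Fin N whose two members are disjoint; σ's choice in the sub-problem Q is
the member of Q containing σ(X ∪ Y), and the sub-problem loss is 1 exactly
when that choice is contained in A and the other member equals Z. -/
theorem hopp_pairs_loss_bound {N K : ℕ} (hN : 1 ≤ N) (hK : 1 ≤ K)
    (A : Finset (Fin N)) (hAcard : A.card ≤ K)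
    (Z : Finset (Fin N)) (hZA : Z ⊆ A) (hZcard : Z.card = 2)
    (ℓ : Fin N → ℕ) (hℓ : ∀ a : Fin N, ℓ a = if a ∈ Z then 0 else 1)
    (m : Equiv.Perm (Fin N))
    (sel : Finset (Fin N) → Fin N)
    (hsel : ∀ S : Finset (Fin N), S.Nonempty →
      sel S ∈ S ∧ ∀ b ∈ S, m (sel S) ≤ m b) :
    (∑ Q ∈ (((Finset.univ : Finset (Fin N)).powersetCard 2).powersetCard 2).filter
        (fun Q => ∀ X ∈ Q, ∀ Y ∈ Q, X ≠ Y → Disjoint X Y),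
      if ∃ X ∈ Q, sel (Q.sup id) ∈ X ∧ X ⊆ A ∧ Z ∈ Q.erase X
        then 1 else 0) ≤
      Nat.choose (K - 2) 2 * ℓ (sel A) := by
  classical
  set s := (((Finset.univ : Finset (Fin N)).powersetCard 2).powersetCard 2).filter
        (fun Q => ∀ X ∈ Q, ∀ Y ∈ Q, X ≠ Y → Disjoint X Y) with hs
  set P : Finset (Finset (Fin N)) → Prop :=
    fun Q => ∃ X ∈ Q, sel (Q.sup id) ∈ X ∧ X ⊆ A ∧ Z ∈ Q.erase X with hP
  have hsum : (∑ Q ∈ s, if P Q then 1 else 0) = (s.filter P).card := by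
    rw [Finset.sum_boole, Nat.cast_id]
  rw [hsum]
  have hZne : Z.Nonempty := by
    rw [← Finset.card_pos, hZcard]; norm_num
  have hAne : A.Nonempty := hZne.mono hZA
  have key : ∀ Q ∈ s.filter P, ∃ X, Q = {X, Z} ∧ X ≠ Z ∧ X ⊆ A ∧
      Disjoint X Z ∧ X.card = 2 ∧ sel (X ∪ Z) ∈ X := by
    intro Q hQ
    rw [Finset.mem_filter] at hQ
    obtain ⟨hQs, X, hXQ, hselX, hXA, hZer⟩ := hQ
    rw [hs, Finset.mem_filter, Finset.mem_powersetCard] at hQs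
    obtain ⟨⟨hQsub, hQcard⟩, hdisj⟩ := hQs
    rw [Finset.mem_erase] at hZer
    obtain ⟨hZX, hZQ⟩ := hZer
    have hXZ : X ≠ Z := fun h => hZX h.symm
    have hXcard : X.card = 2 := by
      have := hQsub hXQ
      rw [Finset.mem_powersetCard] at this
      exact this.2
    have hpair : ({X, Z} : Finset (Finset (Fin N))) ⊆ Q := by
      intro t ht
      rcases Finset.mem_insert.mp ht with h | h
      · exact h ▸ hXQ
      · exact (Finset.mem_singleton.mp h) ▸ hZQ
    have hQeq : Q = {X, Z} := by
      refine (Finset.eq_of_subset_of_card_le hpair ?_).symm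
      rw [Finset.card_pair hXZ, hQcard]
    have hdXZ : Disjoint X Z := hdisj X hXQ Z hZQ hXZ
    have hsup : Q.sup id = X ∪ Z := by
      rw [hQeq]; simp [Finset.sup_insert, Finset.sup_singleton]
    refine ⟨X, hQeq, hXZ, hXA, hdXZ, hXcard, ?_⟩
    rw [← hsup]; exact hselX
  by_cases h : sel A ∈ Z
  · have hempty : s.filter P = ∅ := by
      rw [Finset.eq_empty_iff_forall_notMem]
      intro Q hQ
      obtain ⟨X, hQeq, hXZ, hXA, hdXZ, hXcard, hselin⟩ := key Q hQ
      have hXZA : X ∪ Z ⊆ A := Finset.union_subset hXA hZA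
      have hXZne : (X ∪ Z).Nonempty := hZne.mono Finset.subset_union_right
      have h1 : m (sel A) ≤ m (sel (X ∪ Z)) :=
        (hsel A hAne).2 _ (hXZA (hsel _ hXZne).1)
      have h2 : m (sel (X ∪ Z)) ≤ m (sel A) :=
        (hsel _ hXZne).2 _ (Finset.subset_union_right h)
      have : sel (X ∪ Z) = sel A := m.injective (le_antisymm h2 h1)
      exact (Finset.disjoint_left.mp hdXZ hselin) (this ▸ h)
    rw [hempty]
    simp
  · have hℓ1 : ℓ (sel A) = 1 := by rw [hℓ, if_neg h]
    rw [hℓ1, mul_one]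
    have hinj : (s.filter P).card ≤ ((A \ Z).powersetCard 2).card := by
      apply Finset.card_le_card_of_injOn (fun Q => Q.sup id \ Z)
      · intro Q hQ
        obtain ⟨X, hQeq, hXZ, hXA, hdXZ, hXcard, _⟩ := key Q hQ
        have hsup : Q.sup id = X ∪ Z := by
          rw [hQeq]; simp [Finset.sup_insert, Finset.sup_singleton]
        have hfx : Q.sup id \ Z = X := by
          rw [hsup, Finset.union_sdiff_right, Finset.sdiff_eq_self_of_disjoint hdXZ]
        simp only [Finset.mem_coe]
        rw [hfx, Finset.mem_powersetCard]
        exact ⟨fun a ha => Finset.mem_sdiff.mpr ⟨hXA ha,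
          Finset.disjoint_left.mp hdXZ ha⟩, hXcard⟩
      · intro Q hQ Q' hQ' hf
        obtain ⟨X, hQeq, _, _, hdXZ, _, _⟩ := key Q hQ
        obtain ⟨X', hQ'eq, _, _, hdXZ', _, _⟩ := key Q' hQ'
        have hfx : Q.sup id \ Z = X := by
          rw [hQeq]; simp only [Finset.sup_insert, Finset.sup_singleton, id, Finset.sup_eq_union]
          rw [Finset.union_sdiff_right, Finset.sdiff_eq_self_of_disjoint hdXZ]
        have hfx' : Q'.sup id \ Z = X' := by
          rw [hQ'eq]; simp only [Finset.sup_insert, Finset.sup_singleton, id, Finset.sup_eq_union]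
          rw [Finset.union_sdiff_right, Finset.sdiff_eq_self_of_disjoint hdXZ']
        have : X = X' := by rw [← hfx, ← hfx']; exact hf
        rw [hQeq, hQ'eq, this]
    calc (s.filter P).card ≤ ((A \ Z).powersetCard 2).card := hinj
      _ = Nat.choose (A.card - 2) 2 := by
          rw [Finset.card_powersetCard, Finset.card_sdiff_of_subset hZA, hZcard]
      _ ≤ Nat.choose (K - 2) 2 :=
          Nat.choose_le_choose 2 (Nat.sub_le_sub_right hAcard 2)
end

section
/- Let N, K ≥ 1, let A ⊆ [N] with |A| ≤ K, let Z ⊆ A with |Z| = 2, and define losses ℓ(a) = 0 if a ∈ Z and ℓ(a) = 1 otherwise. Let σ be a ranking of [N]. For each 3-element subset S ⊆ [N] and each i ∈ S, define d^S(i) = ℓ(i) · 𝟙[Z ⊆ S ⊆ A]. Then Σ over all 3-element subsets S of [N] of d^S(σ(S)) is at most (K−2) · ℓ(σ(A)). -/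
/-- HOPP triple sub-problem loss bound (second half of Lemma 8 of the paper):
the total sub-problem loss of a ranking σ over all 3-element subsets S of [N],
where d^S(i) = ℓ(i)·𝟙[Z ⊆ S ⊆ A], is at most (K-2)·ℓ(σ(A)). -/
theorem hopp_triples_loss_bound {N K : ℕ} (hN : 1 ≤ N) (hK : 1 ≤ K)
    (A : Finset (Fin N)) (hAcard : A.card ≤ K)
    (Z : Finset (Fin N)) (hZA : Z ⊆ A) (hZcard : Z.card = 2)
    (ℓ : Fin N → ℕ) (hℓ : ∀ a : Fin N, ℓ a = if a ∈ Z then 0 else 1)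
    (m : Equiv.Perm (Fin N))
    (sel : Finset (Fin N) → Fin N)
    (hsel : ∀ S : Finset (Fin N), S.Nonempty →
      sel S ∈ S ∧ ∀ b ∈ S, m (sel S) ≤ m b) :
    (∑ S ∈ (Finset.univ : Finset (Fin N)).powersetCard 3,
        ℓ (sel S) * (if Z ⊆ S ∧ S ⊆ A then 1 else 0)) ≤
      (K - 2) * ℓ (sel A) := by
  classical
  have hA2 : 2 ≤ A.card := hZcard ▸ Finset.card_le_card hZA
  have hAne : A.Nonempty := Finset.card_pos.mp (by omega)
  obtain ⟨hselA1, hselA2⟩ := hsel A hAne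
  set T := ((Finset.univ : Finset (Fin N)).powersetCard 3).filter
    (fun S => Z ⊆ S ∧ S ⊆ A) with hT
  have hsum : (∑ S ∈ (Finset.univ : Finset (Fin N)).powersetCard 3,
      ℓ (sel S) * (if Z ⊆ S ∧ S ⊆ A then 1 else 0)) = ∑ S ∈ T, ℓ (sel S) := by
    rw [hT, Finset.sum_filter]
    apply Finset.sum_congr rfl
    intro S _
    split <;> simp
  rw [hsum]
  have hbound : ∀ S ∈ T, ℓ (sel S) ≤ ℓ (sel A) := by
    intro S hS
    simp only [hT, Finset.mem_filter, Finset.mem_powersetCard] at hS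
    obtain ⟨⟨_, hS3⟩, hZS, hSA⟩ := hS
    have hSne : S.Nonempty := Finset.card_pos.mp (by omega)
    obtain ⟨hselS1, hselS2⟩ := hsel S hSne
    by_cases h : sel A ∈ Z
    · have h1 : m (sel S) ≤ m (sel A) := hselS2 _ (hZS h)
      have h2 : m (sel A) ≤ m (sel S) := hselA2 _ (hSA hselS1)
      have : sel S = sel A := m.injective (le_antisymm h1 h2)
      rw [this]
    · rw [hℓ (sel A), if_neg h, hℓ (sel S)]
      split <;> omega
  have hTcard : T.card ≤ K - 2 := by
    have hsub : T ⊆ (A \ Z).image (fun a => insert a Z) := by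
      intro S hS
      simp only [hT, Finset.mem_filter, Finset.mem_powersetCard] at hS
      obtain ⟨⟨_, hS3⟩, hZS, hSA⟩ := hS
      have hdiff : (S \ Z).card = 1 := by
        rw [Finset.card_sdiff_of_subset hZS, hS3, hZcard]
      obtain ⟨a, ha⟩ := Finset.card_eq_one.mp hdiff
      have haS : a ∈ S \ Z := ha ▸ Finset.mem_singleton_self a
      rw [Finset.mem_sdiff] at haS
      apply Finset.mem_image.mpr
      refine ⟨a, Finset.mem_sdiff.mpr ⟨hSA haS.1, haS.2⟩, ?_⟩
      have : S = (S \ Z) ∪ Z := (Finset.sdiff_union_of_subset hZS).symm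
      rw [this, ha]; exact (Finset.insert_eq a Z).symm
    calc T.card ≤ ((A \ Z).image (fun a => insert a Z)).card :=
          Finset.card_le_card hsub
      _ ≤ (A \ Z).card := Finset.card_image_le
      _ = A.card - 2 := by rw [Finset.card_sdiff_of_subset hZA, hZcard]
      _ ≤ K - 2 := by omega
  calc ∑ S ∈ T, ℓ (sel S) ≤ ∑ S ∈ T, ℓ (sel A) := Finset.sum_le_sum hbound
    _ = T.card * ℓ (sel A) := by rw [Finset.sum_const, smul_eq_mul]
    _ ≤ (K - 2) * ℓ (sel A) := Nat.mul_le_mul_right _ hTcard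
end

section
/- Let N ≥ 1 and T ∈ ℕ. Let A_1,…,A_T be nonempty subsets of [N], let ℓ_1,…,ℓ_T : [N] → {0,1}, and let level_1,…,level_{T+1} : [N] → ℕ and a_1,…,a_T satisfy: level_1(a) = 0 for all a; for each t, a_t ∈ A_t with level_t(a_t) ≤ level_t(b) for all b ∈ A_t; and level_{t+1}(a) = level_t(a) + ℓ_t(a_t)·𝟙[a = a_t]. Then for every t ∈ {1,…,T+1}, every action a ∈ [N], and every ranking σ of [N], it holds that level_t(a) ≤ m_σ(a) − 1 + Σ_{τ=1}^{t−1} ℓ_τ(σ(A_τ)). -/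
/-- Key lemma for the Level algorithm (Lemma 10 of the paper): for every round
t, action x, and ranking σ, level_t(x) ≤ (m_σ(x) - 1) + Σ_{τ<t} ℓ_τ(σ(A_τ)).
Rounds are indexed from 0, so `level 0` is the initial level and the bound is
claimed for all t ≤ T; the position `(m x : ℕ) ∈ {0,…,N-1}` equals
m_σ(x) - 1 when positions are counted from 1. -/
theorem level_algorithm_key_lemma {N : ℕ} (hN : 1 ≤ N) (T : ℕ)
    (A : ℕ → Finset (Fin N)) (hA : ∀ t < T, (A t).Nonempty)
    (ℓ : ℕ → Fin N → ℕ) (hℓ : ∀ t < T, ∀ x : Fin N, ℓ t x = 0 ∨ ℓ t x = 1)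
    (level : ℕ → Fin N → ℕ) (a : ℕ → Fin N)
    (hlevel0 : ∀ x : Fin N, level 0 x = 0)
    (ha : ∀ t < T, a t ∈ A t ∧ ∀ b ∈ A t, level t (a t) ≤ level t b)
    (hrec : ∀ t < T, ∀ x : Fin N,
      level (t + 1) x = level t x + ℓ t (a t) * (if x = a t then 1 else 0))
    (m : Equiv.Perm (Fin N))
    (sel : Finset (Fin N) → Fin N)
    (hsel : ∀ S : Finset (Fin N), S.Nonempty →
      sel S ∈ S ∧ ∀ b ∈ S, m (sel S) ≤ m b) :
    ∀ t ≤ T, ∀ x : Fin N,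
      level t x ≤ (m x : ℕ) + ∑ τ ∈ Finset.range t, ℓ τ (sel (A τ)) := by
  intro t
  induction t with
  | zero => intro _ x; simp [hlevel0]
  | succ n ih =>
    intro ht x
    have hn : n < T := ht
    have ihn := ih (le_of_lt hn)
    rw [hrec n hn x, Finset.sum_range_succ]
    by_cases hx : x = a n
    · subst hx
      rcases hℓ n hn (a n) with hz | h1
      · have := ihn (a n); simp [hz]; omega
      · rw [h1, if_pos rfl, mul_one]
        have hsel' := hsel (A n) (hA n hn)
        by_cases hs : sel (A n) = a n
        · have := ihn (a n)
          rw [hs, h1]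
          omega
        · have hle : level n (a n) ≤ level n (sel (A n)) :=
            (ha n hn).2 _ hsel'.1
          have hm : (m (sel (A n)) : ℕ) < (m (a n) : ℕ) := by
            have h2 : m (sel (A n)) ≤ m (a n) := hsel'.2 _ (ha n hn).1
            have hne : m (sel (A n)) ≠ m (a n) := fun h => hs (m.injective h)
            exact lt_of_le_of_ne (Fin.le_iff_val_le_val.mp h2)
              (fun h => hne (Fin.ext h))
          have := ihn (sel (A n))
          omega
    · have := ihn x
      simp [hx]
      omega
end

section
/- Let N ≥ 1 and T ∈ ℕ. Let A_1,…,A_T be nonempty subsets of [N], let ℓ_1,…,ℓ_T : [N] → {0,1}, and let level_1,…,level_{T+1} : [N] → ℕ and a_1,…,a_T satisfy: level_1(a) = 0 for all a; for each t, a_t ∈ A_t with level_t(a_t) ≤ level_t(b) for all b ∈ A_t; and level_{t+1}(a) = level_t(a) + ℓ_t(a_t)·𝟙[a = a_t]. Then for every ranking σ of [N]: Σ_{t=1}^T ℓ_t(a_t) ≤ N · Σ_{t=1}^T ℓ_t(σ(A_t)) + N(N−1)/2. -/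
/-- Approximate regret bound of the Level algorithm (Theorem 9 of the paper):
the total loss of the learner is at most N times the total loss of any
ranking σ plus N(N-1)/2. -/
theorem level_algorithm_regret {N : ℕ} (hN : 1 ≤ N) (T : ℕ)
    (A : ℕ → Finset (Fin N)) (hA : ∀ t < T, (A t).Nonempty)
    (ℓ : ℕ → Fin N → ℕ) (hℓ : ∀ t < T, ∀ x : Fin N, ℓ t x = 0 ∨ ℓ t x = 1)
    (level : ℕ → Fin N → ℕ) (a : ℕ → Fin N)
    (hlevel0 : ∀ x : Fin N, level 0 x = 0)
    (ha : ∀ t < T, a t ∈ A t ∧ ∀ b ∈ A t, level t (a t) ≤ level t b)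
    (hrec : ∀ t < T, ∀ x : Fin N,
      level (t + 1) x = level t x + ℓ t (a t) * (if x = a t then 1 else 0))
    (m : Equiv.Perm (Fin N))
    (sel : Finset (Fin N) → Fin N)
    (hsel : ∀ S : Finset (Fin N), S.Nonempty →
      sel S ∈ S ∧ ∀ b ∈ S, m (sel S) ≤ m b) :
    ∑ t ∈ Finset.range T, ℓ t (a t) ≤
      N * ∑ t ∈ Finset.range T, ℓ t (sel (A t)) + N * (N - 1) / 2 := by
  -- Key invariant: level t x ≤ (loss of σ up to t) + rank of x
  have key : ∀ t ≤ T, ∀ x : Fin N,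
      level t x ≤ (∑ s ∈ Finset.range t, ℓ s (sel (A s))) + (m x : ℕ) := by
    intro t
    induction t with
    | zero => intro _ x; simp [hlevel0]
    | succ t ih =>
      intro ht x
      have ht' : t < T := ht
      have ihx := ih (le_of_lt ht')
      rw [hrec t ht' x, Finset.sum_range_succ]
      by_cases hx : x = a t
      · subst hx
        rw [if_pos rfl, mul_one]
        by_cases hs : a t = sel (A t)
        · have := ihx (a t)
          rw [hs] at *
          omega
        · obtain ⟨hmem, hmin⟩ := hsel (A t) (hA t ht')
          obtain ⟨hamem, hamin⟩ := ha t ht'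
          have hmle : m (sel (A t)) ≤ m (a t) := hmin _ hamem
          have hmne : m (sel (A t)) ≠ m (a t) := fun h => hs (m.injective h).symm
          have hmlt : (m (sel (A t)) : ℕ) < (m (a t) : ℕ) := by
            have := lt_of_le_of_ne hmle hmne
            exact this
          have hlev : level t (a t) ≤ level t (sel (A t)) := hamin _ hmem
          have h1 := ihx (sel (A t))
          have h2 : ℓ t (a t) ≤ 1 := by rcases hℓ t ht' (a t) with h | h <;> omega
          omega
      · simp only [if_neg hx, mul_zero]
        have := ihx x
        omega
  -- Total learner loss equals sum of final levels
  have sum_level : ∀ t ≤ T, ∑ x : Fin N, level t x = ∑ s ∈ Finset.range t, ℓ s (a s) := by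
    intro t
    induction t with
    | zero => intro _; simp [hlevel0]
    | succ t ih =>
      intro ht
      have ht' : t < T := ht
      rw [Finset.sum_range_succ, ← ih (le_of_lt ht')]
      have : ∀ x : Fin N, level (t + 1) x = level t x + ℓ t (a t) * (if x = a t then 1 else 0) :=
        hrec t ht'
      rw [Finset.sum_congr rfl (fun x _ => this x), Finset.sum_add_distrib, ← Finset.mul_sum]
      simp
  have hsum : ∑ t ∈ Finset.range T, ℓ t (a t) = ∑ x : Fin N, level T x :=
    (sum_level T le_rfl).symm
  rw [hsum]
  calc ∑ x : Fin N, level T x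
      ≤ ∑ x : Fin N, ((∑ s ∈ Finset.range T, ℓ s (sel (A s))) + (m x : ℕ)) :=
        Finset.sum_le_sum (fun x _ => key T le_rfl x)
    _ = N * (∑ s ∈ Finset.range T, ℓ s (sel (A s))) + ∑ x : Fin N, (m x : ℕ) := by
        rw [Finset.sum_add_distrib, Finset.sum_const, Finset.card_univ, Fintype.card_fin,
          smul_eq_mul]
    _ = N * (∑ s ∈ Finset.range T, ℓ s (sel (A s))) + N * (N - 1) / 2 := by
        congr 1
        rw [Equiv.sum_comp m (fun y : Fin N => (y : ℕ))]
        rw [Fin.sum_univ_eq_sum_range (fun k => k) N]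
        exact Finset.sum_range_id N
end
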